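/- If K_i are prime cubic critical portraits and K_i → K in CrP, then K is prime. -/

import Mathlib

noncomputable section

open Filter Metric

/-- Points of the unit circle `S`. -/
abbrev SPt : Type := {z : ℂ // ‖z‖ = 1}

/-- The unit circle, as a subset of `ℂ`. -/
def circleSet : Set ℂ := {z : ℂ | ‖z‖ = 1}

/-- The open unit disk `D`. -/
def openDisk : Set ℂ := Metric.ball (0 : ℂ) 1

/-- The map `σ_d : S → S`, `z ↦ z ^ d`. -/
def sigmaS (d : ℕ) (z : SPt) : SPt :=
  ⟨(z : ℂ) ^ d, by rw [norm_pow, z.2, one_pow]⟩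

/-- A chord, identified with the unordered pair of its endpoints. -/
abbrev Chord : Type := Sym2 SPt

/-- The closed straight segment in `ℂ` spanned by a chord. -/
def chordSet : Chord → Set ℂ :=
  Sym2.lift ⟨fun a b => segment ℝ (a : ℂ) (b : ℂ), fun a b => segment_symm ℝ _ _⟩

/-- The image chord `σ_d(ℓ)`. -/
def chordMap (d : ℕ) : Chord → Chord := Sym2.map (sigmaS d)

/-- Two (distinct) chords cross if they intersect in the open unit disk. -/
def Cross (c₁ c₂ : Chord) : Prop :=
  c₁ ≠ c₂ ∧ (chordSet c₁ ∩ chordSet c₂ ∩ openDisk).Nonempty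

/-- The length `|ℓ|` of a chord: the normalized length of the shorter arc
subtended by its endpoints (total circle length 1). -/
def chordLength : Chord → ℝ :=
  Sym2.lift ⟨fun a b => |Complex.arg ((a : ℂ) / (b : ℂ))| / (2 * Real.pi), by
    intro a b
    dsimp only
    have h : ((b : ℂ) / (a : ℂ)) = ((a : ℂ) / (b : ℂ))⁻¹ := (inv_div _ _).symm
    rw [h, Complex.arg_inv]
    split_ifs with hpi
    · rw [hpi]
    · rw [abs_neg]⟩

/-- A lamination: a family of pairwise non-crossing chords containing all
degenerate chords, whose union is compact. -/
structure Lamination : Type where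
  leaves : Set Chord
  no_cross : ∀ ℓ₁ ∈ leaves, ∀ ℓ₂ ∈ leaves, ¬ Cross ℓ₁ ℓ₂
  diag_mem : ∀ z : SPt, Sym2.diag z ∈ leaves
  plus_compact : IsCompact (⋃ ℓ ∈ leaves, chordSet ℓ)

/-- `Λ⁺`, the union of all leaves of `Λ`. -/
def Lamination.plus (Λ : Lamination) : Set ℂ := ⋃ ℓ ∈ Λ.leaves, chordSet ℓ

/-- Sibling `σ_d`-invariance of a lamination. -/
def Lamination.Invariant (Λ : Lamination) (d : ℕ) : Prop :=
  (∀ ℓ ∈ Λ.leaves, chordMap d ℓ ∈ Λ.leaves) ∧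
  (∀ ℓ ∈ Λ.leaves, ∃ p ∈ Λ.leaves, chordMap d p = ℓ) ∧
  (∀ ℓ ∈ Λ.leaves, ¬ (chordMap d ℓ).IsDiag →
    ∃ s : Fin d → Chord, (∃ i, s i = ℓ) ∧ (∀ i, s i ∈ Λ.leaves) ∧
      Function.Injective s ∧
      (∀ i j, i ≠ j → chordSet (s i) ∩ chordSet (s j) = ∅) ∧
      (∀ i, chordMap d (s i) = chordMap d ℓ))

/-- A lamination is nonempty if it has a nondegenerate leaf. -/
def Lamination.NonemptyLam (Λ : Lamination) : Prop := ∃ ℓ ∈ Λ.leaves, ¬ ℓ.IsDiag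

/-- A gap of `Λ`: the closure of a connected component of `D ∖ Λ⁺`. -/
def IsGap (Λ : Lamination) (G : Set ℂ) : Prop :=
  ∃ x ∈ openDisk \ Λ.plus, G = closure (connectedComponentIn (openDisk \ Λ.plus) x)

/-- A finite gap: a gap meeting the circle in finitely many points. -/
def FiniteGap (Λ : Lamination) (G : Set ℂ) : Prop := IsGap Λ G ∧ (G ∩ circleSet).Finite

/-- `ℓ` is an edge of `G`: a maximal nondegenerate straight segment (with
endpoints on the circle) contained in the boundary of `G`. -/
def IsEdge (G : Set ℂ) (ℓ : Chord) : Prop :=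
  ¬ ℓ.IsDiag ∧ chordSet ℓ ⊆ frontier G ∧
    ∀ ℓ' : Chord, chordSet ℓ ⊆ chordSet ℓ' → chordSet ℓ' ⊆ frontier G →
      chordSet ℓ' = chordSet ℓ

/-- `σ_d(G)` for a set `G`: the convex hull of the image of `G ∩ S`. -/
def gapImage (d : ℕ) (G : Set ℂ) : Set ℂ :=
  convexHull ℝ ((fun z : ℂ => z ^ d) '' (G ∩ circleSet))

/-- A lap of `Λ`: a finite gap, or (the segment of) a nondegenerate leaf not
contained in the boundary of a finite gap. -/
def IsLap (Λ : Lamination) (G : Set ℂ) : Prop :=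
  FiniteGap Λ G ∨
    ∃ ℓ ∈ Λ.leaves, ¬ ℓ.IsDiag ∧ G = chordSet ℓ ∧
      ∀ H : Set ℂ, FiniteGap Λ H → ¬ chordSet ℓ ⊆ frontier H

/-- Distance between chords (Hausdorff distance between their segments). -/
def chordDist (c₁ c₂ : Chord) : ℝ := Metric.hausdorffDist (chordSet c₁) (chordSet c₂)

/-- Hausdorff convergence `Λ_i → Λ` of laminations (leaf sets converge in the
Hausdorff metric on the compact space of chords). -/
def LamTendsto (Λi : ℕ → Lamination) (Λ : Lamination) : Prop :=
  ∀ ε > (0 : ℝ), ∀ᶠ n in atTop,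
    (∀ ℓ ∈ (Λi n).leaves, ∃ ℓ' ∈ Λ.leaves, chordDist ℓ ℓ' < ε) ∧
    (∀ ℓ' ∈ Λ.leaves, ∃ ℓ ∈ (Λi n).leaves, chordDist ℓ ℓ' < ε)

/-- An isolated leaf of `Λ`: some neighborhood of it in the space of chords
contains no other leaf of `Λ`. -/
def IsolatedLeaf (Λ : Lamination) (ℓ : Chord) : Prop :=
  ℓ ∈ Λ.leaves ∧ ∃ ε > (0 : ℝ), ∀ ℓ' ∈ Λ.leaves, chordDist ℓ' ℓ < ε → ℓ' = ℓ

/-- A perfect lamination: no isolated leaves. -/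
def Lamination.PerfectLam (Λ : Lamination) : Prop := ∀ ℓ ∈ Λ.leaves, ¬ IsolatedLeaf Λ ℓ

/-- A set of chords closed under limits. -/
def ClosedChordSet (P : Set Chord) : Prop :=
  ∀ f : ℕ → Chord, (∀ n, f n ∈ P) → ∀ c : Chord,
    Tendsto (fun n => chordDist (f n) c) atTop (nhds 0) → c ∈ P

/-- A perfect set of chords: closed and with no isolated points. -/
def PerfectChordSet (P : Set Chord) : Prop :=
  ClosedChordSet P ∧ ∀ c ∈ P, ∀ ε > (0 : ℝ), ∃ c' ∈ P, c' ≠ c ∧ chordDist c c' < ε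

/-- The perfect part `Λᵖ` of `Λ`: the maximal perfect subset of its leaf set. -/
def perfectPart (Λ : Lamination) : Set Chord :=
  ⋃₀ {P : Set Chord | P ⊆ Λ.leaves ∧ PerfectChordSet P}

/-- A countable lamination: countably many nondegenerate leaves. -/
def Lamination.CountableLam (Λ : Lamination) : Prop :=
  {ℓ ∈ Λ.leaves | ¬ ℓ.IsDiag}.Countable

/-- `Λc` is a chief of `Λ`: a minimal-by-inclusion nonempty sibling
`σ_d`-invariant sublamination of `Λ`. -/
def IsChiefOf (d : ℕ) (Λc Λ : Lamination) : Prop :=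
  Λc.leaves ⊆ Λ.leaves ∧ Λc.Invariant d ∧ Λc.NonemptyLam ∧
    ∀ Λ' : Lamination, Λ'.leaves ⊆ Λc.leaves → Λ'.Invariant d → Λ'.NonemptyLam →
      Λ'.leaves = Λc.leaves

/-- A clean lamination: distinct non-disjoint leaves lie on the boundary of a
common finite gap. -/
def Lamination.Clean (Λ : Lamination) : Prop :=
  ∀ ℓ₁ ∈ Λ.leaves, ∀ ℓ₂ ∈ Λ.leaves, ℓ₁ ≠ ℓ₂ → (chordSet ℓ₁ ∩ chordSet ℓ₂).Nonempty →
    ∃ G : Set ℂ, FiniteGap Λ G ∧ chordSet ℓ₁ ⊆ frontier G ∧ chordSet ℓ₂ ⊆ frontier G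

/-- A limit lamination: a sibling `σ_3`-invariant lamination that is a limit of
clean sibling `σ_3`-invariant laminations. -/
def IsLimitLam (Λ : Lamination) : Prop :=
  Λ.Invariant 3 ∧
    ∃ Λi : ℕ → Lamination, (∀ n, (Λi n).Invariant 3 ∧ (Λi n).Clean) ∧ LamTendsto Λi Λ

/-- A chief: a chief of some nonempty limit lamination. -/
def IsChief (Λc : Lamination) : Prop :=
  ∃ Λ : Lamination, IsLimitLam Λ ∧ Λ.NonemptyLam ∧ IsChiefOf 3 Λc Λ

/-- A `σ_3`-critical chord. -/
def IsCritChord (c : Chord) : Prop := ¬ c.IsDiag ∧ (chordMap 3 c).IsDiag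

/-- An unordered pair of chords (candidate critical portrait). -/
abbrev Portrait : Type := Sym2 Chord

/-- A cubic critical portrait: an unordered pair of non-crossing
`σ_3`-critical chords. -/
def IsPortrait (K : Portrait) : Prop :=
  ∃ c y : Chord, K = s(c, y) ∧ IsCritChord c ∧ IsCritChord y ∧ ¬ Cross c y

/-- The space `CrP` of all cubic critical portraits. -/
def CrP : Set Portrait := {K | IsPortrait K}

/-- `I(ℓ)` for a critical chord `ℓ`: the open arc of length 1/3 cut off by `ℓ`
(the points of the circle strictly separated from the center by `ℓ`). -/
def Iarc (ℓ : Chord) : Set SPt :=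
  {z : SPt | (z : ℂ) ∉ chordSet ℓ ∧ (segment ℝ (0 : ℂ) (z : ℂ) ∩ chordSet ℓ).Nonempty}

/-- The forward orbit `{σ_3ⁿ(ℓ) : n ≥ 1}` of a critical chord `ℓ` (each image
is a single point of the circle). -/
def critOrbit (ℓ : Chord) : Set SPt :=
  {z : SPt | ∃ n, 1 ≤ n ∧ ∃ a ∈ ℓ, (sigmaS 3)^[n] a = z}

/-- A weak critical portrait. -/
def IsWeak (K : Portrait) : Prop :=
  IsPortrait K ∧ ∃ c y : Chord, K = s(c, y) ∧
    (critOrbit c ∩ Iarc y = ∅ ∨ critOrbit y ∩ Iarc c = ∅)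

/-- A strong critical portrait. -/
def IsStrong (K : Portrait) : Prop := IsPortrait K ∧ ¬ IsWeak K

/-- Distance between (critical) portraits, metrizing convergence of the
unordered pairs of chords. -/
def portraitDist : Portrait → Portrait → ℝ :=
  Sym2.lift₂ ⟨fun a b c d =>
      min (max (chordDist a c) (chordDist b d)) (max (chordDist a d) (chordDist b c)), by
    intro a₁ a₂ b₁ b₂
    constructor
    · dsimp only
      rw [min_comm, max_comm (chordDist a₁ b₂), max_comm (chordDist a₁ b₁)]
    · dsimp only
      rw [min_comm]⟩

/-- Convergence `K_i → K` in `CrP`. -/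
def PortraitTendsto (f : ℕ → Portrait) (K : Portrait) : Prop :=
  Tendsto (fun n => portraitDist (f n) K) atTop (nhds 0)

/-- A critical portrait is compatible with a lamination if none of its chords
crosses a leaf. -/
def Compat (K : Portrait) (Λ : Lamination) : Prop :=
  ∀ c ∈ K, ∀ ℓ ∈ Λ.leaves, ¬ Cross c ℓ

/-- `C(Λ)`: the set of critical portraits compatible with `Λ`. -/
def CC (Λ : Lamination) : Set Portrait := {K | K ∈ CrP ∧ Compat K Λ}

/-- Friendship of critical portraits: both compatible with a common nonempty
limit lamination. -/
def Friends (K₁ K₂ : Portrait) : Prop :=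
  ∃ Λ : Lamination, IsLimitLam Λ ∧ Λ.NonemptyLam ∧ K₁ ∈ CC Λ ∧ K₂ ∈ CC Λ

/-- A prime critical portrait: some friend of it has a weak friend. -/
def IsPrime (K : Portrait) : Prop :=
  ∃ K' K'' : Portrait, Friends K K' ∧ Friends K' K'' ∧ IsWeak K''

/-- A regular chief: a chief all of whose critical portraits have only strong
friends. -/
def RegularChief (Λ : Lamination) : Prop :=
  IsChief Λ ∧ ∀ K ∈ CC Λ, ∀ K' : Portrait, Friends K K' → IsStrong K'

/-- A regular lamination: one having a regular chief. -/
def RegularLam (Λ : Lamination) : Prop :=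
  ∃ Λc : Lamination, IsChiefOf 3 Λc Λ ∧ RegularChief Λc

/-- A regular critical portrait: one compatible with a regular chief. -/
def RegularPortrait (K : Portrait) : Prop :=
  ∃ Λ : Lamination, RegularChief Λ ∧ K ∈ CC Λ

/-- Rotation of a circle point by angle `2πt`. -/
def rotPt (t : ℝ) (a : SPt) : SPt :=
  ⟨Complex.exp ((t * (2 * Real.pi) : ℝ) * Complex.I) * (a : ℂ), by
    rw [norm_mul, a.2, mul_one, Complex.norm_exp_ofReal_mul_I]⟩

/-- Circular betweenness: `b` lies on the (closed) counterclockwise arc from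
`a` to `c` (and `a`, `b`, `c` occur in this counterclockwise order). -/
def CBtw (a b c : SPt) : Prop :=
  ∃ s t : ℝ, 0 ≤ s ∧ s ≤ t ∧ t < 1 ∧ b = rotPt s a ∧ c = rotPt t a

/-- An invariant gap: a gap `G` of some sibling `σ_3`-invariant lamination
with `σ_3(G) = G`. -/
def IsInvGap (G : Set ℂ) : Prop :=
  ∃ Λ : Lamination, Λ.Invariant 3 ∧ IsGap Λ G ∧ gapImage 3 G = G

/-- An infinite gap (meets the circle in infinitely many points). -/
def InfiniteGapSet (G : Set ℂ) : Prop := (G ∩ circleSet).Infinite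

/-- Two circle points lie in the closure of a common complementary arc of
`G ∩ S` (or coincide): the fibers of the edge-collapsing map of `∂G`. -/
def complArcFiber (G : Set ℂ) (z w : SPt) : Prop :=
  z = w ∨ ∃ x : SPt, (x : ℂ) ∉ G ∧
    z ∈ closure (connectedComponentIn {y : SPt | (y : ℂ) ∉ G} x) ∧
    w ∈ closure (connectedComponentIn {y : SPt | (y : ℂ) ∉ G} x)

/-- A quadratic invariant gap: an infinite invariant gap of degree 2, i.e.
after collapsing the complementary arcs (edges) of its boundary, `σ_3` induces
a two-to-one covering map of the circle. -/
def QuadGap (G : Set ℂ) : Prop :=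
  IsInvGap G ∧ InfiniteGapSet G ∧
    ∃ φ : SPt → SPt, Continuous φ ∧ Function.Surjective φ ∧
      (∀ z w : SPt, φ z = φ w ↔ complArcFiber G z w) ∧
      ∃ g : SPt → SPt, IsCoveringMap g ∧ (∀ w : SPt, Nat.card (g ⁻¹' {w}) = 2) ∧
        ∀ z : SPt, (z : ℂ) ∈ G → φ (sigmaS 3 z) = g (φ z)

/-- A critical portrait is compatible with a gap if none of its chords crosses
an edge of the gap. -/
def CompatGap (K : Portrait) (G : Set ℂ) : Prop :=
  ∀ c ∈ K, ∀ ℓ : Chord, IsEdge G ℓ → ¬ Cross c ℓ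

/-- A set of portraits closed in `CrP`. -/
def ClosedPortraitSet (A : Set Portrait) : Prop :=
  ∀ f : ℕ → Portrait, (∀ n, f n ∈ A) → ∀ K ∈ CrP, PortraitTendsto f K → K ∈ A

/-- A finite rotational lap: a finite lap on which `σ_3` acts as a
combinatorial rotation of the vertices. -/
def RotationalLap (Λ : Lamination) (G : Set ℂ) : Prop :=
  IsLap Λ G ∧ (G ∩ circleSet).Finite ∧ gapImage 3 G = G ∧
    (∀ z : SPt, (z : ℂ) ∈ G → ((sigmaS 3 z : SPt) : ℂ) ∈ G) ∧
    ∀ a b c : SPt, (a : ℂ) ∈ G → (b : ℂ) ∈ G → (c : ℂ) ∈ G →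
      CBtw a b c → CBtw (sigmaS 3 a) (sigmaS 3 b) (sigmaS 3 c)

/-!
Fix a nonprincipal ultrafilter `U` on `ℕ`. The space of chords, with the quotient topology of
`Sym2 SPt`, is compact and metrized by the Hausdorff distance of the segments, so along `U` every
sequence of chords, and of critical portraits, converges. The `U`-limit of the leaf sets of
nonempty limit laminations is again a nonempty limit lamination: the limit of sibling families is
a sibling family, a diagonal argument approximates it by clean laminations, and it is nonempty
because `σ_3` at least doubles the Euclidean length of every chord of length at most `1`, so each
lamination has a leaf of length greater than `1`. Since crossing is an open condition,
compatibility with the laminations passes to the limit. Applied twice to the friendships `K_i ~ K_i' ~ K_i''` witnessing primality,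
this yields friendships `K ~ K' ~ K''` with `K''` a limit of weak portraits, and weakness is a
closed condition because `I(y)` depends openly on the critical chord `y`.
-/

open Topology Set

section UnitVectors

variable {E : Type*} [NormedAddCommGroup E] [InnerProductSpace ℝ E]

lemma norm_add_smul_sub_sq {a b : E} (ha : ‖a‖ = 1) (hb : ‖b‖ = 1) (r : ℝ) :
    ‖a + r • (b - a)‖ ^ 2 = 1 - r * (1 - r) * ‖a - b‖ ^ 2 := by
  have hab : a + r • (b - a) = (1 - r) • a + r • b := by
    rw [smul_sub, sub_smul, one_smul]; abel
  rw [hab, norm_add_sq_real, norm_sub_sq_real, norm_smul, norm_smul, real_inner_smul_left,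
    real_inner_smul_right, ha, hb, Real.norm_eq_abs, Real.norm_eq_abs, mul_pow, mul_pow,
    sq_abs, sq_abs]
  ring

lemma eq_or_eq_of_norm_add_smul_sub {a b : E} (ha : ‖a‖ = 1) (hb : ‖b‖ = 1) {r : ℝ}
    (hr : ‖a + r • (b - a)‖ = 1) : a + r • (b - a) = a ∨ a + r • (b - a) = b := by
  rcases eq_or_ne a b with rfl | hab
  · simp
  have hpos : 0 < ‖a - b‖ ^ 2 := by positivity [sub_ne_zero.mpr hab]
  have h := norm_add_smul_sub_sq ha hb r
  rw [hr, one_pow] at h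
  have hr01 : r * (1 - r) = 0 := by
    rcases mul_eq_zero.mp (show r * (1 - r) * ‖a - b‖ ^ 2 = 0 by linarith) with h | h
    · exact h
    · exact absurd h hpos.ne'
  rcases mul_eq_zero.mp hr01 with h0 | h1
  · left; simp [h0]
  · right; rw [show r = 1 by linarith, one_smul]; abel

lemma eq_or_eq_of_mem_segment_of_norm_eq_one {a b c : E} (ha : ‖a‖ = 1) (hb : ‖b‖ = 1)
    (hc : ‖c‖ = 1) (h : c ∈ segment ℝ a b) : c = a ∨ c = b := by
  rw [segment_eq_image'] at h
  obtain ⟨r, -, rfl⟩ := h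
  exact eq_or_eq_of_norm_add_smul_sub ha hb hc

end UnitVectors

lemma eq_neg_of_add_smul_sub_eq_zero {E : Type*} [NormedAddCommGroup E] [NormedSpace ℝ E]
    {a b : E} (ha : ‖a‖ = 1) (hb : ‖b‖ = 1) {r : ℝ} (h : a + r • (b - a) = 0) : b = -a := by
  have h' : (1 - r) • a = -(r • b) := by rw [← sub_eq_zero, ← h]; module
  have hnorm := congrArg norm h'
  rw [norm_neg, norm_smul, norm_smul, ha, hb, mul_one, mul_one, Real.norm_eq_abs,
    Real.norm_eq_abs] at hnorm
  have hr : r = 1 / 2 := by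
    have := sq_abs (1 - r); rw [hnorm, sq_abs] at this; nlinarith
  have hsum : (1 / 2 : ℝ) • (a + b) = 0 := by rw [← h, hr]; module
  rw [smul_eq_zero] at hsum
  exact eq_neg_of_add_eq_zero_right (hsum.resolve_left (by norm_num))

lemma two_mul_dist_le_dist_pow_three {a b : ℂ} (ha : ‖a‖ = 1) (hb : ‖b‖ = 1)
    (h : dist a b ≤ 1) : 2 * dist a b ≤ dist (a ^ 3) (b ^ 3) := by
  rw [dist_eq_norm] at h ⊢
  rw [dist_eq_norm, show a ^ 3 - b ^ 3 = (a - b) * ((a - b) ^ 2 + 3 * (a * b)) by ring, norm_mul]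
  have h3 : ‖3 * (a * b)‖ = 3 := by rw [norm_mul, norm_mul, ha, hb]; norm_num
  have hle : 2 ≤ ‖(a - b) ^ 2 + 3 * (a * b)‖ := by
    have := norm_sub_norm_le (3 * (a * b)) (-(a - b) ^ 2)
    rw [sub_neg_eq_add, add_comm, h3, norm_neg, norm_pow] at this
    nlinarith [norm_nonneg (a - b)]
  nlinarith [norm_nonneg (a - b)]

lemma one_lt_dist_of_pow_three_eq {a b : ℂ} (ha : ‖a‖ = 1) (hb : ‖b‖ = 1) (hab : a ≠ b)
    (h : a ^ 3 = b ^ 3) : 1 < dist a b := by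
  by_contra hle
  have := two_mul_dist_le_dist_pow_three ha hb (not_lt.mp hle)
  rw [h, dist_self] at this
  exact hab (dist_le_zero.mp (by linarith))

section Wedge

def wedge (z w : ℂ) : ℝ := z.re * w.im - z.im * w.re

lemma continuous_wedge : Continuous fun p : ℂ × ℂ => wedge p.1 p.2 := by
  unfold wedge; fun_prop

lemma exists_eq_smul_of_wedge_eq_zero {v w : ℂ} (hv : v ≠ 0) (h : wedge v w = 0) :
    ∃ t : ℝ, w = t • v := by
  have hv2 : v.re ^ 2 + v.im ^ 2 ≠ 0 := by
    have := Complex.normSq_pos.mpr hv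
    rw [Complex.normSq_apply] at this
    nlinarith
  unfold wedge at h
  refine ⟨(v.re * w.re + v.im * w.im) / (v.re ^ 2 + v.im ^ 2), Complex.ext ?_ ?_⟩ <;>
    simp only [Complex.real_smul, Complex.mul_re, Complex.mul_im, Complex.ofReal_re,
      Complex.ofReal_im] <;>
    field_simp
  · linear_combination (-v.im) * h
  · linear_combination v.re * h

lemma add_smul_eq_add_smul_of_wedge_ne_zero (a u c v : ℂ) (h : wedge u v ≠ 0) :
    a + (wedge (c - a) v / wedge u v) • u = c + (wedge (c - a) u / wedge u v) • v := by
  unfold wedge at h ⊢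
  have h' : v.im * u.re - v.re * u.im ≠ 0 := by contrapose! h; linear_combination h
  apply Complex.ext <;>
  · simp only [Complex.add_re, Complex.add_im, Complex.real_smul, Complex.mul_re,
      Complex.mul_im, Complex.ofReal_re, Complex.ofReal_im, Complex.sub_re, Complex.sub_im]
    field_simp
    ring

lemma eq_wedge_div_of_add_smul_eq {a u c v : ℂ} {s t : ℝ} (h : a + s • u = c + t • v)
    (hw : wedge u v ≠ 0) : s = wedge (c - a) v / wedge u v ∧ t = wedge (c - a) u / wedge u v := by
  have e1 := congrArg Complex.re h
  have e2 := congrArg Complex.im h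
  simp only [Complex.add_re, Complex.add_im, Complex.real_smul, Complex.mul_re,
    Complex.mul_im, Complex.ofReal_re, Complex.ofReal_im, zero_mul, sub_zero, add_zero] at e1 e2
  constructor <;> rw [eq_div_iff hw] <;> unfold wedge <;> simp only [Complex.sub_re, Complex.sub_im]
  · linear_combination v.im * e1 - v.re * e2
  · linear_combination u.im * e1 - u.re * e2

/-- By Cramer's rule the intersection parameters depend continuously on the endpoints. -/
lemma eventually_exists_mem_segment_inter {ι : Type*} {l : Filter ι} {a b c d : ι → ℂ}
    {A B C D : ℂ} (ha : Tendsto a l (𝓝 A)) (hb : Tendsto b l (𝓝 B)) (hc : Tendsto c l (𝓝 C))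
    (hd : Tendsto d l (𝓝 D)) {s t : ℝ} (hs : s ∈ Ioo (0 : ℝ) 1) (ht : t ∈ Ioo (0 : ℝ) 1)
    (hst : A + s • (B - A) = C + t • (D - C)) (hw : wedge (B - A) (D - C) ≠ 0) {ε : ℝ}
    (hε : 0 < ε) :
    ∀ᶠ i in l, ∃ x ∈ segment ℝ (a i) (b i) ∩ segment ℝ (c i) (d i),
      dist x (A + s • (B - A)) < ε := by
  have tendsto_wedge : ∀ {f g : ι → ℂ} {F G : ℂ}, Tendsto f l (𝓝 F) → Tendsto g l (𝓝 G) →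
      Tendsto (fun i => wedge (f i) (g i)) l (𝓝 (wedge F G)) := fun hf hg =>
    (continuous_wedge.tendsto _).comp (hf.prodMk_nhds hg)
  have hW := tendsto_wedge (hb.sub ha) (hd.sub hc)
  obtain ⟨hs', ht'⟩ := eq_wedge_div_of_add_smul_eq hst hw
  have hsi : Tendsto (fun i => wedge (c i - a i) (d i - c i) / wedge (b i - a i) (d i - c i))
      l (𝓝 s) := hs' ▸ (tendsto_wedge (hc.sub ha) (hd.sub hc)).div hW hw
  have hti : Tendsto (fun i => wedge (c i - a i) (b i - a i) / wedge (b i - a i) (d i - c i))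
      l (𝓝 t) := ht' ▸ (tendsto_wedge (hc.sub ha) (hb.sub ha)).div hW hw
  have hx : Tendsto (fun i => a i + (wedge (c i - a i) (d i - c i) /
      wedge (b i - a i) (d i - c i)) • (b i - a i)) l (𝓝 (A + s • (B - A))) :=
    ha.add (hsi.smul (hb.sub ha))
  filter_upwards [hW.eventually_ne hw, hsi.eventually (isOpen_Ioo.mem_nhds hs),
    hti.eventually (isOpen_Ioo.mem_nhds ht), Metric.tendsto_nhds.mp hx ε hε]
    with i hwi hsi hti hxi
  refine ⟨_, ⟨?_, ?_⟩, hxi⟩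
  · rw [segment_eq_image']; exact ⟨_, Ioo_subset_Icc_self hsi, rfl⟩
  · rw [add_smul_eq_add_smul_of_wedge_ne_zero _ _ _ _ hwi, segment_eq_image']
    exact ⟨_, Ioo_subset_Icc_self hti, rfl⟩

end Wedge

lemma exists_mem_segment_dist_le {E : Type*} [SeminormedAddCommGroup E] [NormedSpace ℝ E]
    {a b u v x : E} (hx : x ∈ segment ℝ a b) :
    ∃ y ∈ segment ℝ u v, dist x y ≤ max (dist a u) (dist b v) := by
  obtain ⟨p, q, hp, hq, hpq, rfl⟩ := hx
  refine ⟨p • u + q • v, ⟨p, q, hp, hq, hpq, rfl⟩, ?_⟩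
  calc dist (p • a + q • b) (p • u + q • v) ≤ dist (p • a) (p • u) + dist (q • b) (q • v) :=
        dist_add_add_le _ _ _ _
    _ = p * dist a u + q * dist b v := by
        rw [dist_smul₀, dist_smul₀, Real.norm_of_nonneg hp, Real.norm_of_nonneg hq]
    _ ≤ p * max (dist a u) (dist b v) + q * max (dist a u) (dist b v) := by
        gcongr
        exacts [le_max_left _ _, le_max_right _ _]
    _ = max (dist a u) (dist b v) := by rw [← add_mul, hpq, one_mul]

lemma Ultrafilter.exists_tendsto {ι X : Type*} [TopologicalSpace X] [CompactSpace X]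
    (U : Ultrafilter ι) (f : ι → X) : ∃ x, Tendsto f U (𝓝 x) :=
  ⟨_, (U.map f).le_nhds_lim⟩

lemma Ultrafilter.exists_eventually_of_eventually_exists {ι κ : Type*} [Finite κ]
    (U : Ultrafilter ι) {p : κ → ι → Prop} (h : ∀ᶠ i in U, ∃ k, p k i) :
    ∃ k, ∀ᶠ i in U, p k i := by
  have : (⋃ k ∈ (univ : Set κ), {i | p k i}) ∈ U := by
    filter_upwards [h] with i ⟨k, hk⟩
    exact mem_biUnion (mem_univ k) hk
  obtain ⟨k, -, hk⟩ := (U.finite_biUnion_mem_iff finite_univ).mp this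
  exact ⟨k, hk⟩

lemma Filter.Tendsto.subtype_val {ι α : Type*} [TopologicalSpace α] {p : α → Prop}
    {l : Filter ι} {f : ι → Subtype p} {x : Subtype p} (hf : Tendsto f l (𝓝 x)) :
    Tendsto (fun i => (f i : α)) l (𝓝 (x : α)) :=
  (continuous_subtype_val.tendsto x).comp hf

section ChordSpace

instance : Inhabited SPt := ⟨⟨1, by simp⟩⟩

instance : CompactSpace SPt :=
  (isCompact_iff_compactSpace (s := {z : ℂ | ‖z‖ = 1})).mp <| by
    simpa [Metric.sphere] using isCompact_sphere (0 : ℂ) 1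

lemma continuous_sigmaS (d : ℕ) : Continuous (sigmaS d) :=
  (continuous_subtype_val.pow d).subtype_mk _

lemma chordSet_mk (a b : SPt) : chordSet s(a, b) = segment ℝ (a : ℂ) b := rfl

lemma chordMap_mk (d : ℕ) (a b : SPt) : chordMap d s(a, b) = s(sigmaS d a, sigmaS d b) := rfl

lemma isCompact_chordSet (c : Chord) : IsCompact (chordSet c) := by
  induction c using Sym2.ind with | _ a b =>
  rw [chordSet_mk, ← convexHull_pair (𝕜 := ℝ)]
  exact (Set.toFinite _).isCompact_convexHull ℝ

lemma chordSet_nonempty (c : Chord) : (chordSet c).Nonempty := by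
  induction c using Sym2.ind with | _ a b => exact ⟨a, left_mem_segment ..⟩

lemma chordSet_injective : Function.Injective chordSet := by
  intro c₁ c₂ h
  induction c₁ using Sym2.ind with | _ a b =>
  induction c₂ using Sym2.ind with | _ u v =>
  simp only [chordSet_mk] at h
  have mem : ∀ {x y z w : SPt}, segment ℝ (x : ℂ) y = segment ℝ (z : ℂ) w → x = z ∨ x = w :=
    fun {x y z w} h => (eq_or_eq_of_mem_segment_of_norm_eq_one z.2 w.2 x.2
      (h ▸ left_mem_segment ..)).imp Subtype.ext Subtype.ext
  have ha := mem h
  have hb := mem ((segment_symm ..).trans h)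
  have hu := mem h.symm
  have hv := mem ((segment_symm ..).trans h.symm)
  rw [Sym2.eq_iff]
  rcases ha with rfl | rfl <;> rcases hb with rfl | rfl <;> tauto

def chordCompacts (c : Chord) : TopologicalSpace.NonemptyCompacts ℂ :=
  ⟨⟨chordSet c, isCompact_chordSet c⟩, chordSet_nonempty c⟩

lemma chordCompacts_injective : Function.Injective chordCompacts := fun _ _ h =>
  chordSet_injective (congrArg (fun K : TopologicalSpace.NonemptyCompacts ℂ => (K : Set ℂ)) h)

lemma chordDist_mk_le (a b u v : SPt) :
    chordDist s(a, b) s(u, v) ≤ max (dist a u) (dist b v) := by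
  refine hausdorffDist_le_of_mem_dist (le_max_of_le_left dist_nonneg)
    (fun x hx => exists_mem_segment_dist_le hx) (fun x hx => ?_)
  obtain ⟨y, hy, hxy⟩ := exists_mem_segment_dist_le (a := (u : ℂ)) (b := v) (u := a) (v := b) hx
  rw [dist_comm (u : ℂ), dist_comm (v : ℂ)] at hxy
  exact ⟨y, hy, hxy⟩

lemma continuous_chordCompacts : Continuous chordCompacts := by
  refine isQuotientMap_quot_mk.continuous_iff.mpr <| LipschitzWith.continuous (K := 1) <|
    LipschitzWith.of_dist_le_mul fun (p q : SPt × SPt) => ?_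
  rw [NNReal.coe_one, one_mul, Prod.dist_eq]
  exact chordDist_mk_le p.1 p.2 q.1 q.2

/-- The Hausdorff distance of segments metrizes the quotient topology of `Sym2 SPt`:
`chordCompacts` is a continuous injection of a compact space, hence a closed embedding. -/
instance : MetricSpace Chord :=
  (MetricSpace.induced chordCompacts chordCompacts_injective inferInstance).replaceTopology
    (continuous_chordCompacts.isClosedEmbedding chordCompacts_injective).eq_induced

lemma continuous_uncurry_mk : Continuous (Function.uncurry (Sym2.mk : SPt → SPt → Chord)) :=
  continuous_quot_mk

lemma exists_endpoints_tendsto {ι : Type*} {U : Ultrafilter ι} {f : ι → Chord} {c : Chord}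
    (hf : Tendsto f U (𝓝 c)) :
    ∃ (α β : ι → SPt) (A B : SPt), (∀ i, f i = s(α i, β i)) ∧ Tendsto α U (𝓝 A) ∧
      Tendsto β U (𝓝 B) ∧ c = s(A, B) := by
  choose p hp using fun i => Sym2.mk_surjective (f i)
  obtain ⟨P, hP⟩ := U.exists_tendsto p
  have hmk := (continuous_uncurry_mk.tendsto P).comp hP
  refine ⟨fun i => (p i).1, fun i => (p i).2, P.1, P.2, fun i => (hp i).symm,
    (continuous_fst.tendsto P).comp hP, (continuous_snd.tendsto P).comp hP, ?_⟩
  exact tendsto_nhds_unique hf (hmk.congr hp)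

lemma Filter.Tendsto.sigmaS {ι : Type*} (d : ℕ) {l : Filter ι} {f : ι → SPt} {x : SPt}
    (hf : Tendsto f l (𝓝 x)) : Tendsto (fun i => sigmaS d (f i)) l (𝓝 (sigmaS d x)) :=
  ((continuous_sigmaS d).tendsto x).comp hf

lemma tendsto_mk {ι : Type*} {l : Filter ι} {α β : ι → SPt} {A B : SPt}
    (hα : Tendsto α l (𝓝 A)) (hβ : Tendsto β l (𝓝 B)) :
    Tendsto (fun i => s(α i, β i)) l (𝓝 s(A, B)) :=
  (continuous_uncurry_mk.tendsto (A, B)).comp (hα.prodMk_nhds hβ)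

lemma continuous_chordMap (d : ℕ) : Continuous (chordMap d) := by
  refine continuous_iff_ultrafilter.mpr fun c U hU => ?_
  obtain ⟨α, β, A, B, hαβ, hα, hβ, rfl⟩ := exists_endpoints_tendsto (f := id) hU
  exact (tendsto_mk (hα.sigmaS d) (hβ.sigmaS d)).congr fun c =>
    (congrArg (chordMap d) (hαβ c)).symm

lemma isCompact_biUnion_chordSet {L : Set Chord} (hL : IsClosed L) :
    IsCompact (⋃ ℓ ∈ L, chordSet ℓ) := by
  have hK : IsCompact ((Function.uncurry Sym2.mk ⁻¹' L) ×ˢ Icc (0 : ℝ) 1) :=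
    (hL.preimage continuous_uncurry_mk).isCompact.prod isCompact_Icc
  convert hK.image (f := fun q : (SPt × SPt) × ℝ => (q.1.1 : ℂ) + q.2 • ((q.1.2 : ℂ) - q.1.1))
    (by fun_prop)
  ext x
  simp only [mem_iUnion, mem_image, exists_prop]
  constructor
  · rintro ⟨ℓ, hℓ, hx⟩
    induction ℓ using Sym2.ind with | _ a b =>
    rw [chordSet_mk, segment_eq_image'] at hx
    obtain ⟨r, hr, rfl⟩ := hx
    exact ⟨((a, b), r), ⟨hℓ, hr⟩, rfl⟩
  · rintro ⟨⟨⟨a, b⟩, r⟩, ⟨hℓ, hr⟩, rfl⟩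
    exact ⟨s(a, b), hℓ, by rw [chordSet_mk, segment_eq_image']; exact ⟨r, hr, rfl⟩⟩

end ChordSpace

section Crossing

lemma mem_openDisk_iff {x : ℂ} : x ∈ openDisk ↔ ‖x‖ < 1 := by
  simp [openDisk]

lemma norm_le_one_of_mem_chordSet {c : Chord} {x : ℂ} (hx : x ∈ chordSet c) : ‖x‖ ≤ 1 := by
  induction c using Sym2.ind with | _ a b =>
  have := (convex_closedBall (0 : ℂ) 1).segment_subset (by simp [a.2]) (by simp [b.2]) hx
  simpa using this

lemma ne_and_exists_Ioo_of_mem_segment {a b : SPt} {x : ℂ} (hx : x ∈ segment ℝ (a : ℂ) b)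
    (hx1 : ‖x‖ < 1) : a ≠ b ∧ ∃ s ∈ Ioo (0 : ℝ) 1, (a : ℂ) + s • ((b : ℂ) - a) = x := by
  rw [segment_eq_image'] at hx
  obtain ⟨s, ⟨hs0, hs1⟩, rfl⟩ := hx
  refine ⟨fun hab => ?_, s, ⟨hs0.lt_of_ne fun h => ?_, hs1.lt_of_ne fun h => ?_⟩, rfl⟩
  · simp [hab, b.2] at hx1
  · simp [← h, a.2] at hx1
  · simp [h, b.2] at hx1

lemma wedge_ne_zero_of_chords_ne {A B C D : SPt} (hAB : A ≠ B) (hCD : C ≠ D)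
    (hne : s(A, B) ≠ s(C, D)) {s t : ℝ}
    (hst : (A : ℂ) + s • ((B : ℂ) - A) = C + t • ((D : ℂ) - C)) :
    wedge ((B : ℂ) - A) ((D : ℂ) - C) ≠ 0 := by
  intro hw
  obtain ⟨r, hr⟩ := exists_eq_smul_of_wedge_eq_zero
    (sub_ne_zero.mpr fun h => hAB (Subtype.ext h).symm) hw
  have onLine : ∀ {P : SPt} (u : ℝ), (P : ℂ) = A + u • ((B : ℂ) - A) → P = A ∨ P = B :=
    fun {P} u hP => (eq_or_eq_of_norm_add_smul_sub A.2 B.2 (hP ▸ P.2)).imp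
      (fun h => Subtype.ext (hP.trans h)) (fun h => Subtype.ext (hP.trans h))
  have hC := onLine (P := C) (s - t * r) (by linear_combination (norm := module) -hst - t • hr)
  have hD := onLine (P := D) (s - t * r + r) <| by
    linear_combination (norm := module) (1 - t) • hr - hst
  rcases hC with hC | hC <;> rcases hD with hD | hD
  · exact hCD (hC.trans hD.symm)
  · exact hne (by rw [hC, hD])
  · exact hne (by rw [hC, hD, Sym2.eq_swap])
  · exact hCD (hC.trans hD.symm)

lemma eventually_cross_mk {ι : Type*} {l : Filter ι} {α β γ δ : ι → SPt} {A B C D : SPt}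
    (hα : Tendsto α l (𝓝 A)) (hβ : Tendsto β l (𝓝 B)) (hγ : Tendsto γ l (𝓝 C))
    (hδ : Tendsto δ l (𝓝 D)) (h : Cross s(A, B) s(C, D)) :
    ∀ᶠ i in l, Cross s(α i, β i) s(γ i, δ i) := by
  obtain ⟨hne, x, ⟨hxAB, hxCD⟩, hx⟩ := h
  rw [mem_openDisk_iff] at hx
  obtain ⟨hAB, s, hs, rfl⟩ := ne_and_exists_Ioo_of_mem_segment hxAB hx
  obtain ⟨hCD, t, ht, hst⟩ := ne_and_exists_Ioo_of_mem_segment hxCD hx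
  have hchords := (tendsto_mk hα hβ).prodMk_nhds (tendsto_mk hγ hδ)
  filter_upwards [eventually_exists_mem_segment_inter hα.subtype_val hβ.subtype_val
      hγ.subtype_val hδ.subtype_val hs ht
      hst.symm (wedge_ne_zero_of_chords_ne hAB hCD hne hst.symm) (sub_pos.mpr hx),
    hchords.eventually ((isOpen_ne_fun continuous_fst continuous_snd).mem_nhds hne)]
    with i ⟨y, hy, hyx⟩ hnei
  refine ⟨hnei, y, hy, mem_openDisk_iff.mpr ?_⟩
  calc ‖y‖ ≤ ‖(A : ℂ) + s • ((B : ℂ) - A)‖ + dist y ((A : ℂ) + s • ((B : ℂ) - A)) := by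
        rw [dist_eq_norm]; exact norm_le_insert' _ _
    _ < 1 := by linarith

lemma isOpen_setOf_cross : IsOpen {p : Chord × Chord | Cross p.1 p.2} := by
  refine isOpen_iff_ultrafilter.mpr fun ⟨c, d⟩ hcd U hU => ?_
  obtain ⟨α, β, A, B, hαβ, hα, hβ, rfl⟩ :=
    exists_endpoints_tendsto ((continuous_fst.tendsto (c, d)).mono_left hU)
  obtain ⟨γ, δ, C, D, hγδ, hγ, hδ, rfl⟩ :=
    exists_endpoints_tendsto ((continuous_snd.tendsto (s(A, B), d)).mono_left hU)
  filter_upwards [eventually_cross_mk hα hβ hγ hδ hcd] with p hp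
  show Cross p.1 p.2
  rwa [hαβ p, hγδ p]

lemma not_cross_of_tendsto {ι : Type*} {l : Filter ι} [l.NeBot] {f g : ι → Chord} {c d : Chord}
    (hf : Tendsto f l (𝓝 c)) (hg : Tendsto g l (𝓝 d)) (h : ∀ᶠ i in l, ¬ Cross (f i) (g i)) :
    ¬ Cross c d := fun hcd =>
  (h.and ((hf.prodMk_nhds hg).eventually (isOpen_setOf_cross.mem_nhds hcd))).exists.elim
    fun _ hi => hi.1 hi.2

lemma exists_dist_lt_imp_cross {c d : Chord} (h : Cross c d) :
    ∃ ε > 0, ∀ a b : Chord, dist a c < ε → dist b d < ε → Cross a b := by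
  obtain ⟨ε, hε, hball⟩ := Metric.isOpen_iff.mp isOpen_setOf_cross (c, d) h
  exact ⟨ε, hε, fun a b ha hb => hball (show (a, b) ∈ ball (c, d) ε by
    simp [Prod.dist_eq, ha, hb])⟩

lemma disjoint_chordSet_of_not_cross {A B C D : SPt} (hAC : A ≠ C) (hAD : A ≠ D)
    (hBC : B ≠ C) (hBD : B ≠ D) (h : ¬ Cross s(A, B) s(C, D)) :
    Disjoint (chordSet s(A, B)) (chordSet s(C, D)) := by
  refine Set.disjoint_left.mpr fun x hxAB hxCD => ?_
  rcases (norm_le_one_of_mem_chordSet hxAB).lt_or_eq with hx | hx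
  · refine h ⟨fun he => ?_, x, ⟨hxAB, hxCD⟩, mem_openDisk_iff.mpr hx⟩
    rcases Sym2.eq_iff.mp he with ⟨h1, -⟩ | ⟨h1, -⟩
    exacts [hAC h1, hAD h1]
  · have endpoint : ∀ {P Q : SPt}, x ∈ segment ℝ (P : ℂ) Q → x = P ∨ x = Q :=
      fun {P Q} hx' => eq_or_eq_of_mem_segment_of_norm_eq_one P.2 Q.2 hx hx'
    rcases endpoint hxAB with rfl | rfl <;> rcases endpoint hxCD with h' | h'
    exacts [hAC (Subtype.ext h'), hAD (Subtype.ext h'), hBC (Subtype.ext h'),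
      hBD (Subtype.ext h')]

end Crossing

section Critical

lemma isCritChord_mk_iff {a b : SPt} :
    IsCritChord s(a, b) ↔ a ≠ b ∧ (a : ℂ) ^ 3 = (b : ℂ) ^ 3 := by
  simp only [IsCritChord, chordMap_mk, Sym2.mk_isDiag_iff, sigmaS, Subtype.mk.injEq]

lemma ne_of_tendsto_of_pow_three_eq {ι : Type*} {l : Filter ι} [l.NeBot] {f g : ι → SPt}
    {P Q : SPt} (hf : Tendsto f l (𝓝 P)) (hg : Tendsto g l (𝓝 Q))
    (h : ∀ᶠ i in l, f i ≠ g i ∧ (f i : ℂ) ^ 3 = (g i : ℂ) ^ 3) : P ≠ Q := by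
  rintro rfl
  have := ge_of_tendsto (hf.dist hg) <| h.mono fun i hi =>
    (one_lt_dist_of_pow_three_eq (f i).2 (g i).2 (Subtype.coe_ne_coe.mpr hi.1) hi.2).le
  rw [dist_self] at this
  linarith

lemma isClosed_setOf_isCritChord : IsClosed {c : Chord | IsCritChord c} := by
  refine isClosed_iff_ultrafilter.mpr fun c U hU hcrit => ?_
  obtain ⟨α, β, A, B, hαβ, hα, hβ, rfl⟩ := exists_endpoints_tendsto (f := id) hU
  have hcrit' : ∀ᶠ i in U, α i ≠ β i ∧ (α i : ℂ) ^ 3 = (β i : ℂ) ^ 3 := by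
    filter_upwards [hcrit] with i hi
    exact isCritChord_mk_iff.mp (hαβ i ▸ hi)
  exact isCritChord_mk_iff.mpr ⟨ne_of_tendsto_of_pow_three_eq hα hβ hcrit',
    tendsto_nhds_unique_of_eventuallyEq (hα.subtype_val.pow 3) (hβ.subtype_val.pow 3)
      (hcrit'.mono fun _ hi => hi.2)⟩

lemma add_smul_sub_ne_zero_of_isCritChord {C D : SPt} (h : IsCritChord s(C, D)) (r : ℝ) :
    (C : ℂ) + r • ((D : ℂ) - C) ≠ 0 := by
  intro h0
  have hcube := (isCritChord_mk_iff.mp h).2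
  rw [eq_neg_of_add_smul_sub_eq_zero C.2 D.2 h0] at hcube
  have hC : (C : ℂ) ^ 3 = 0 := by linear_combination hcube / 2
  simpa [pow_eq_zero_iff, C.2] using congrArg norm hC

lemma wedge_ne_zero_of_isCritChord {C D : SPt} (hℓ : IsCritChord s(C, D)) {z : ℂ} (hz : z ≠ 0)
    {s t : ℝ} (h : (C : ℂ) + t • ((D : ℂ) - C) = s • z) : wedge z ((D : ℂ) - C) ≠ 0 := by
  intro h0
  obtain ⟨r, hr⟩ := exists_eq_smul_of_wedge_eq_zero hz h0
  have hr0 : r ≠ 0 := by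
    rintro rfl
    rw [zero_smul, sub_eq_zero] at hr
    exact (isCritChord_mk_iff.mp hℓ).1 (Subtype.ext hr).symm
  refine add_smul_sub_ne_zero_of_isCritChord hℓ ((t * r - s) / r) ?_
  rw [hr] at h ⊢
  rw [smul_smul, div_mul_cancel₀ _ hr0]
  linear_combination (norm := module) h

lemma eventually_notMem_chordSet {ι : Type*} {l : Filter ι} {x : ι → ℂ} {y : ι → Chord}
    {z : ℂ} {ℓ : Chord} (hx : Tendsto x l (𝓝 z)) (hy : Tendsto y l (𝓝 ℓ))
    (h : z ∉ chordSet ℓ) : ∀ᶠ i in l, x i ∉ chordSet (y i) := by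
  have hpos : 0 < infDist z (chordSet ℓ) :=
    ((isCompact_chordSet ℓ).isClosed.notMem_iff_infDist_pos (chordSet_nonempty ℓ)).mp h
  filter_upwards [Metric.tendsto_nhds.mp hx _ (half_pos hpos),
    Metric.tendsto_nhds.mp hy _ (half_pos hpos)] with i hxi hyi hmem
  have h1 : infDist (x i) (chordSet ℓ) ≤ dist (y i) ℓ :=
    infDist_le_hausdorffDist_of_mem hmem (hausdorffEDist_ne_top_of_nonempty_of_bounded
      (chordSet_nonempty _) (chordSet_nonempty _) (isCompact_chordSet _).isBounded
      (isCompact_chordSet _).isBounded)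
  have h2 := infDist_le_infDist_add_dist (x := z) (y := x i) (s := chordSet ℓ)
  rw [dist_comm] at h2
  linarith

lemma eventually_mem_Iarc {ι : Type*} {U : Ultrafilter ι} {w : ι → SPt} {y : ι → Chord}
    {z : SPt} {ℓ : Chord} (hw : Tendsto w U (𝓝 z)) (hy : Tendsto y U (𝓝 ℓ))
    (hℓ : IsCritChord ℓ) (hz : z ∈ Iarc ℓ) : ∀ᶠ i in U, w i ∈ Iarc (y i) := by
  obtain ⟨hzℓ, x, hx0, hxℓ⟩ := hz
  obtain ⟨γ, δ, C, D, hγδ, hγ, hδ, rfl⟩ := exists_endpoints_tendsto hy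
  rw [segment_eq_image'] at hx0
  obtain ⟨s, ⟨hs0, hs1⟩, rfl⟩ := hx0
  have hs0' : 0 < s := hs0.lt_of_ne <| by
    rintro rfl
    rw [chordSet_mk, segment_eq_image'] at hxℓ
    obtain ⟨r, -, hr⟩ := hxℓ
    exact add_smul_sub_ne_zero_of_isCritChord hℓ r (by simpa using hr)
  have hs1' : s < 1 := hs1.lt_of_ne <| by
    rintro rfl
    exact hzℓ (by simpa using hxℓ)
  have hx1 : ‖(0 : ℂ) + s • ((z : ℂ) - 0)‖ < 1 := by
    simpa [norm_smul, z.2, abs_of_pos hs0'] using hs1'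
  obtain ⟨-, t, ht, hxt⟩ := ne_and_exists_Ioo_of_mem_segment hxℓ hx1
  have hwedge : wedge ((z : ℂ) - 0) ((D : ℂ) - C) ≠ 0 := by
    simpa using wedge_ne_zero_of_isCritChord hℓ
      (ne_zero_of_norm_ne_zero (z.2.symm ▸ one_ne_zero)) (by simpa using hxt)
  filter_upwards [eventually_notMem_chordSet hw.subtype_val hy hzℓ,
    eventually_exists_mem_segment_inter tendsto_const_nhds hw.subtype_val hγ.subtype_val
      hδ.subtype_val ⟨hs0', hs1'⟩ ht hxt.symm hwedge one_pos] with i hi hp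
  obtain ⟨p, hp, -⟩ := hp
  exact ⟨hi, p, hp.1, by rw [hγδ i]; exact hp.2⟩

end Critical

section Ultralimit

variable {ι X : Type*} [MetricSpace X]

def ulimSet (U : Ultrafilter ι) (S : ι → Set X) : Set X :=
  {x | ∀ ε > 0, ∀ᶠ i in U, ∃ a ∈ S i, dist a x < ε}

lemma isClosed_ulimSet (U : Ultrafilter ι) (S : ι → Set X) : IsClosed (ulimSet U S) := by
  refine isClosed_of_closure_subset fun x hx ε hε => ?_
  obtain ⟨y, hy, hxy⟩ := Metric.mem_closure_iff.mp hx (ε / 2) (half_pos hε)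
  filter_upwards [hy (ε / 2) (half_pos hε)] with i ⟨a, ha, hay⟩
  exact ⟨a, ha, by linarith [dist_triangle a y x, dist_comm x y]⟩

lemma mem_ulimSet_of_tendsto {U : Ultrafilter ι} {S : ι → Set X} {f : ι → X} {x : X}
    (hf : ∀ᶠ i in U, f i ∈ S i) (h : Tendsto f U (𝓝 x)) : x ∈ ulimSet U S := fun ε hε => by
  filter_upwards [hf, Metric.tendsto_nhds.mp h ε hε] with i h1 h2
  exact ⟨f i, h1, h2⟩

lemma exists_tendsto_of_mem_ulimSet {U : Ultrafilter ℕ} (hU : (U : Filter ℕ) ≤ atTop)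
    {S : ℕ → Set X} (hS : ∀ n, (S n).Nonempty) {x : X} (hx : x ∈ ulimSet U S) :
    ∃ f : ℕ → X, (∀ n, f n ∈ S n) ∧ Tendsto f U (𝓝 x) := by
  have : ∀ n : ℕ, ∃ a ∈ S n, dist a x < infDist x (S n) + 1 / (n + 1) := fun n => by
    obtain ⟨a, ha, h⟩ := (infDist_lt_iff (hS n)).mp (lt_add_of_pos_right _ Nat.one_div_pos_of_nat)
    exact ⟨a, ha, by rwa [dist_comm]⟩
  choose f hfS hf using this
  refine ⟨f, hfS, Metric.tendsto_nhds.mpr fun ε hε => ?_⟩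
  filter_upwards [hx (ε / 2) (half_pos hε), (tendsto_one_div_add_atTop_nhds_zero_nat.mono_left
    hU).eventually (gt_mem_nhds (half_pos hε))] with n ⟨a, ha, hax⟩ hn
  have := infDist_le_dist_of_mem (x := x) ha
  linarith [hf n, dist_comm a x]

variable [CompactSpace X]

lemma eventually_forall_exists_dist_lt_of_ulimSet (U : Ultrafilter ι) (S : ι → Set X) {ε : ℝ}
    (hε : 0 < ε) : ∀ᶠ i in U, ∀ a ∈ S i, ∃ x ∈ ulimSet U S, dist a x < ε := by
  by_contra h
  have hbad : ∀ᶠ i in U, ∃ a ∈ S i, ∀ x ∈ ulimSet U S, ε ≤ dist a x :=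
    (Ultrafilter.eventually_not.mpr h).mono fun i hi => by push Not at hi; exact hi
  obtain ⟨-, a₀, -⟩ := hbad.exists
  have : Nonempty X := ⟨a₀⟩
  choose! w hwS hw using fun i (hi : ∃ a ∈ S i, ∀ x ∈ ulimSet U S, ε ≤ dist a x) => hi
  obtain ⟨x, hx⟩ := U.exists_tendsto w
  have hxL : x ∈ ulimSet U S := mem_ulimSet_of_tendsto (hbad.mono fun i hi => hwS i hi) hx
  obtain ⟨i, hi, hix⟩ := (hbad.and (Metric.tendsto_nhds.mp hx ε hε)).exists
  exact (hw i hi x hxL).not_gt hix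

lemma eventually_forall_ulimSet_exists_dist_lt (U : Ultrafilter ι) (S : ι → Set X) {ε : ℝ}
    (hε : 0 < ε) : ∀ᶠ i in U, ∀ x ∈ ulimSet U S, ∃ a ∈ S i, dist a x < ε := by
  obtain ⟨t, htL, htfin, hcover⟩ :=
    finite_cover_balls_of_compact (isClosed_ulimSet U S).isCompact (half_pos hε)
  filter_upwards [htfin.eventually_all.mpr fun y hy => htL hy (ε / 2) (half_pos hε)]
    with i hi x hx
  obtain ⟨y, hy, hxy⟩ := mem_iUnion₂.mp (hcover hx)
  obtain ⟨a, ha, hay⟩ := hi y hy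
  exact ⟨a, ha, by linarith [dist_triangle a y x, mem_ball.mp hxy, dist_comm x y]⟩

end Ultralimit

section Siblings

lemma exists_eq_mk_of_chordMap_eq {d : ℕ} {ℓ : Chord} {u v : SPt} (h : chordMap d ℓ = s(u, v)) :
    ∃ x y, ℓ = s(x, y) ∧ sigmaS d x = u ∧ sigmaS d y = v := by
  induction ℓ using Sym2.ind with | _ x y =>
  rcases Sym2.eq_iff.mp h with ⟨hx, hy⟩ | ⟨hx, hy⟩
  exacts [⟨x, y, rfl, hx, hy⟩, ⟨y, x, Sym2.eq_swap, hy, hx⟩]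

lemma not_cross_of_disjoint {c d : Chord} (h : Disjoint (chordSet c) (chordSet d)) :
    ¬ Cross c d :=
  fun ⟨_, _, ⟨hc, hd⟩, _⟩ => Set.disjoint_left.mp h hc hd

lemma ne_of_disjoint_chordSet {a b a' b' : SPt}
    (h : Disjoint (chordSet s(a, b)) (chordSet s(a', b'))) : a ≠ a' ∧ b ≠ b' :=
  ⟨fun e => Set.disjoint_left.mp h (left_mem_segment ..) (e ▸ left_mem_segment ..),
    fun e => Set.disjoint_left.mp h (right_mem_segment ..) (e ▸ right_mem_segment ..)⟩

lemma exists_oriented_siblings {Λ : Lamination} (hΛ : Λ.Invariant 3) {a b : SPt}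
    (hab : s(a, b) ∈ Λ.leaves) (hnd : sigmaS 3 a ≠ sigmaS 3 b) :
    ∃ γ δ : Fin 3 → SPt, (∃ i, γ i = a ∧ δ i = b) ∧ (∀ i, s(γ i, δ i) ∈ Λ.leaves) ∧
      (∀ i j, i ≠ j → Disjoint (chordSet s(γ i, δ i)) (chordSet s(γ j, δ j))) ∧
      ∀ i, sigmaS 3 (γ i) = sigmaS 3 a ∧ sigmaS 3 (δ i) = sigmaS 3 b := by
  obtain ⟨S, ⟨i₀, hi₀⟩, hSΛ, -, hSdisj, hSmap⟩ :=
    hΛ.2.2 _ hab (by rwa [chordMap_mk, Sym2.mk_isDiag_iff])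
  choose γ δ hS hγ hδ using fun i => exists_eq_mk_of_chordMap_eq (hSmap i)
  refine ⟨γ, δ, ⟨i₀, ?_⟩, fun i => hS i ▸ hSΛ i, fun i j hij => ?_, fun i => ⟨hγ i, hδ i⟩⟩
  · rcases Sym2.eq_iff.mp ((hS i₀).symm.trans hi₀) with h | ⟨h, -⟩
    · exact h
    · exact absurd ((hγ i₀).symm.trans (congrArg _ h)) hnd
  · rw [← hS i, ← hS j]
    exact Set.disjoint_iff_inter_eq_empty.mpr (hSdisj i j hij)

/-- Same-role endpoints of disjoint siblings are more than `1` apart, and endpoints of different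
roles have different images, so the four limit endpoints are distinct. -/
lemma disjoint_chordSet_of_tendsto_siblings {ι : Type*} {l : Filter ι} [l.NeBot]
    {a b a' b' : ι → SPt} {A B A' B' : SPt} (ha : Tendsto a l (𝓝 A)) (hb : Tendsto b l (𝓝 B))
    (ha' : Tendsto a' l (𝓝 A')) (hb' : Tendsto b' l (𝓝 B')) (hAB : sigmaS 3 A ≠ sigmaS 3 B)
    (h : ∀ᶠ n in l, Disjoint (chordSet s(a n, b n)) (chordSet s(a' n, b' n)) ∧
      sigmaS 3 (a n) = sigmaS 3 (a' n) ∧ sigmaS 3 (b n) = sigmaS 3 (b' n)) :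
    Disjoint (chordSet s(A, B)) (chordSet s(A', B')) := by
  have hA : sigmaS 3 A = sigmaS 3 A' := tendsto_nhds_unique_of_eventuallyEq (ha.sigmaS 3)
    (ha'.sigmaS 3) (h.mono fun _ hn => hn.2.1)
  have hB : sigmaS 3 B = sigmaS 3 B' := tendsto_nhds_unique_of_eventuallyEq (hb.sigmaS 3)
    (hb'.sigmaS 3) (h.mono fun _ hn => hn.2.2)
  refine disjoint_chordSet_of_not_cross ?_ (fun e => hAB (by rw [hB, e])) (fun e => hAB (by
    rw [hA, e])) ?_ (not_cross_of_tendsto (tendsto_mk ha hb) (tendsto_mk ha' hb')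
      (h.mono fun _ hn => not_cross_of_disjoint hn.1))
  · exact ne_of_tendsto_of_pow_three_eq ha ha' (h.mono fun _ hn =>
      ⟨(ne_of_disjoint_chordSet hn.1).1, congrArg Subtype.val hn.2.1⟩)
  · exact ne_of_tendsto_of_pow_three_eq hb hb' (h.mono fun _ hn =>
      ⟨(ne_of_disjoint_chordSet hn.1).2, congrArg Subtype.val hn.2.2⟩)

end Siblings

lemma exists_leaf_one_lt_dist {Λ : Lamination}
    (hinv : ∀ ℓ ∈ Λ.leaves, chordMap 3 ℓ ∈ Λ.leaves) (hne : Λ.NonemptyLam) :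
    ∃ a b : SPt, s(a, b) ∈ Λ.leaves ∧ 1 < dist a b := by
  by_contra! hsmall
  obtain ⟨ℓ, hℓ, hnd⟩ := hne
  induction ℓ using Sym2.ind with | _ a b =>
  have hpos : 0 < dist a b := dist_pos.mpr (Sym2.mk_isDiag_iff.not.mp hnd)
  have grow : ∀ m : ℕ, s((sigmaS 3)^[m] a, (sigmaS 3)^[m] b) ∈ Λ.leaves ∧
      2 ^ m * dist a b ≤ dist ((sigmaS 3)^[m] a) ((sigmaS 3)^[m] b) := by
    intro m
    induction m with
    | zero => simpa using hℓ
    | succ m ih =>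
      rw [Function.iterate_succ_apply', Function.iterate_succ_apply', pow_succ']
      refine ⟨hinv _ ih.1, ?_⟩
      calc 2 * 2 ^ m * dist a b ≤ 2 * dist ((sigmaS 3)^[m] a) ((sigmaS 3)^[m] b) := by
            rw [mul_assoc]; exact mul_le_mul_of_nonneg_left ih.2 zero_le_two
        _ ≤ _ := two_mul_dist_le_dist_pow_three ((sigmaS 3)^[m] a).2 ((sigmaS 3)^[m] b).2
            (hsmall _ _ ih.1)
  obtain ⟨m, hm⟩ := pow_unbounded_of_one_lt (1 / dist a b) one_lt_two
  rw [div_lt_iff₀ hpos] at hm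
  linarith [(grow m).2, hsmall _ _ (grow m).1]

section LimitLamination

variable {ι : Type*} (U : Ultrafilter ι) (N : ι → Lamination)

def limLam : Lamination where
  leaves := ulimSet U fun i => (N i).leaves
  no_cross c hc d hd hcd := by
    obtain ⟨ε, hε, hcross⟩ := exists_dist_lt_imp_cross hcd
    obtain ⟨i, ⟨a, ha, hac⟩, b, hb, hbd⟩ := ((hc ε hε).and (hd ε hε)).exists
    exact (N i).no_cross a ha b hb (hcross a b hac hbd)
  diag_mem z ε hε := Eventually.of_forall fun i => ⟨_, (N i).diag_mem z, by simpa using hε⟩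
  plus_compact := isCompact_biUnion_chordSet (isClosed_ulimSet _ _)

variable {U N}

lemma not_cross_limLam {p : ι → Chord} {k : Chord} (hp : Tendsto p U (𝓝 k))
    (hcompat : ∀ i, ∀ ℓ ∈ (N i).leaves, ¬ Cross (p i) ℓ) :
    ∀ ℓ ∈ (limLam U N).leaves, ¬ Cross k ℓ := by
  intro ℓ hℓ hkℓ
  obtain ⟨ε, hε, hcross⟩ := exists_dist_lt_imp_cross hkℓ
  obtain ⟨i, hpi, a, ha, haℓ⟩ := ((Metric.tendsto_nhds.mp hp ε hε).and (hℓ ε hε)).exists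
  exact hcompat i a ha (hcross _ _ hpi haℓ)

lemma chordMap_mem_limLam {d : ℕ} (hN : ∀ i, ∀ ℓ ∈ (N i).leaves, chordMap d ℓ ∈ (N i).leaves)
    {c : Chord} (hc : c ∈ (limLam U N).leaves) : chordMap d c ∈ (limLam U N).leaves := by
  intro ε hε
  obtain ⟨δ, hδ, hcont⟩ := Metric.continuous_iff.mp (continuous_chordMap d) c ε hε
  filter_upwards [hc δ hδ] with i ⟨a, ha, hac⟩
  exact ⟨_, hN i a ha, hcont a hac⟩

lemma limLam_nonemptyLam (hN : ∀ i, (N i).Invariant 3 ∧ (N i).NonemptyLam) :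
    (limLam U N).NonemptyLam := by
  choose a b hab hdist using fun i => exists_leaf_one_lt_dist (hN i).1.1 (hN i).2
  obtain ⟨A, hA⟩ := U.exists_tendsto a
  obtain ⟨B, hB⟩ := U.exists_tendsto b
  refine ⟨s(A, B), mem_ulimSet_of_tendsto (Eventually.of_forall hab) (tendsto_mk hA hB),
    Sym2.mk_isDiag_iff.not.mpr fun h => ?_⟩
  have := ge_of_tendsto (hA.dist hB) (Eventually.of_forall fun i => (hdist i).le)
  rw [h, dist_self] at this
  linarith

def LeavesClose (ε : ℝ) (Λ Λ' : Lamination) : Prop :=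
  (∀ ℓ ∈ Λ.leaves, ∃ ℓ' ∈ Λ'.leaves, dist ℓ ℓ' < ε) ∧
    ∀ ℓ' ∈ Λ'.leaves, ∃ ℓ ∈ Λ.leaves, dist ℓ ℓ' < ε

lemma LeavesClose.trans {ε δ : ℝ} {Λ₁ Λ₂ Λ₃ : Lamination} (h₁₂ : LeavesClose ε Λ₁ Λ₂)
    (h₂₃ : LeavesClose δ Λ₂ Λ₃) : LeavesClose (ε + δ) Λ₁ Λ₃ := by
  refine ⟨fun ℓ hℓ => ?_, fun ℓ hℓ => ?_⟩
  · obtain ⟨ℓ₂, h₂, hd₂⟩ := h₁₂.1 ℓ hℓ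
    obtain ⟨ℓ₃, h₃, hd₃⟩ := h₂₃.1 ℓ₂ h₂
    exact ⟨ℓ₃, h₃, (dist_triangle _ _ _).trans_lt (add_lt_add hd₂ hd₃)⟩
  · obtain ⟨ℓ₂, h₂, hd₂⟩ := h₂₃.2 ℓ hℓ
    obtain ⟨ℓ₁, h₁, hd₁⟩ := h₁₂.2 ℓ₂ h₂
    exact ⟨ℓ₁, h₁, (dist_triangle _ _ _).trans_lt (add_lt_add hd₁ hd₂)⟩

lemma LeavesClose.mono {ε δ : ℝ} {Λ Λ' : Lamination} (h : LeavesClose ε Λ Λ') (hεδ : ε ≤ δ) :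
    LeavesClose δ Λ Λ' :=
  ⟨fun ℓ hℓ => (h.1 ℓ hℓ).imp fun _ h' => ⟨h'.1, h'.2.trans_le hεδ⟩,
    fun ℓ hℓ => (h.2 ℓ hℓ).imp fun _ h' => ⟨h'.1, h'.2.trans_le hεδ⟩⟩

lemma lamTendsto_iff {Λi : ℕ → Lamination} {Λ : Lamination} :
    LamTendsto Λi Λ ↔ ∀ ε > 0, ∀ᶠ n in atTop, LeavesClose ε (Λi n) Λ :=
  Iff.rfl

lemma eventually_leavesClose_limLam {ε : ℝ} (hε : 0 < ε) :
    ∀ᶠ i in U, LeavesClose ε (N i) (limLam U N) :=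
  (eventually_forall_exists_dist_lt_of_ulimSet U _ hε).and
    (eventually_forall_ulimSet_exists_dist_lt U _ hε)

end LimitLamination

section NonprincipalLimit

variable {U : Ultrafilter ℕ} {N : ℕ → Lamination}

lemma exists_tendsto_of_mem_limLam (hU : (U : Filter ℕ) ≤ atTop) {c : Chord}
    (hc : c ∈ (limLam U N).leaves) :
    ∃ f : ℕ → Chord, (∀ n, f n ∈ (N n).leaves) ∧ Tendsto f U (𝓝 c) :=
  exists_tendsto_of_mem_ulimSet hU (fun n => ⟨_, (N n).diag_mem default⟩) hc

lemma exists_preimage_limLam (hU : (U : Filter ℕ) ≤ atTop) {d : ℕ}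
    (hN : ∀ n, ∀ ℓ ∈ (N n).leaves, ∃ p ∈ (N n).leaves, chordMap d p = ℓ)
    {c : Chord} (hc : c ∈ (limLam U N).leaves) :
    ∃ p ∈ (limLam U N).leaves, chordMap d p = c := by
  obtain ⟨f, hfN, hf⟩ := exists_tendsto_of_mem_limLam hU hc
  choose p hpN hpf using fun n => hN n (f n) (hfN n)
  obtain ⟨P, hP⟩ := U.exists_tendsto p
  refine ⟨P, mem_ulimSet_of_tendsto (Eventually.of_forall hpN) hP, ?_⟩
  exact tendsto_nhds_unique (((continuous_chordMap d).tendsto P).comp hP)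
    (hf.congr fun n => (hpf n).symm)

lemma exists_siblings_limLam (hU : (U : Filter ℕ) ≤ atTop) (hN : ∀ n, (N n).Invariant 3)
    {c : Chord} (hc : c ∈ (limLam U N).leaves) (hnd : ¬ (chordMap 3 c).IsDiag) :
    ∃ s : Fin 3 → Chord, (∃ i, s i = c) ∧ (∀ i, s i ∈ (limLam U N).leaves) ∧
      Function.Injective s ∧ (∀ i j, i ≠ j → chordSet (s i) ∩ chordSet (s j) = ∅) ∧
      ∀ i, chordMap 3 (s i) = chordMap 3 c := by
  obtain ⟨f, hfN, hf⟩ := exists_tendsto_of_mem_limLam hU hc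
  obtain ⟨α, β, A, B, hfαβ, hα, hβ, rfl⟩ := exists_endpoints_tendsto hf
  have hAB : sigmaS 3 A ≠ sigmaS 3 B := by rwa [chordMap_mk, Sym2.mk_isDiag_iff] at hnd
  have hgood : ∀ᶠ n in U, sigmaS 3 (α n) ≠ sigmaS 3 (β n) :=
    ((hα.sigmaS 3).prodMk_nhds (hβ.sigmaS 3)).eventually
      ((isOpen_ne_fun continuous_fst continuous_snd).mem_nhds hAB)
  choose! γ δ hidx hmem hdisj hγδ using fun n (h : sigmaS 3 (α n) ≠ sigmaS 3 (β n)) =>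
    exists_oriented_siblings (hN n) (hfαβ n ▸ hfN n) h
  choose C hC using fun i => U.exists_tendsto fun n => γ n i
  choose D hD using fun i => U.exists_tendsto fun n => δ n i
  have hσC : ∀ i, sigmaS 3 (C i) = sigmaS 3 A := fun i =>
    tendsto_nhds_unique_of_eventuallyEq ((hC i).sigmaS 3) (hα.sigmaS 3)
      (hgood.mono fun n hn => (hγδ n hn i).1)
  have hσD : ∀ i, sigmaS 3 (D i) = sigmaS 3 B := fun i =>
    tendsto_nhds_unique_of_eventuallyEq ((hD i).sigmaS 3) (hβ.sigmaS 3)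
      (hgood.mono fun n hn => (hγδ n hn i).2)
  have hdisjLim : ∀ i j, i ≠ j → Disjoint (chordSet s(C i, D i)) (chordSet s(C j, D j)) :=
    fun i j hij => disjoint_chordSet_of_tendsto_siblings (hC i) (hD i) (hC j) (hD j)
      (by rwa [hσC, hσD]) <| hgood.mono fun n hn => ⟨hdisj n hn i j hij,
        (hγδ n hn i).1.trans (hγδ n hn j).1.symm, (hγδ n hn i).2.trans (hγδ n hn j).2.symm⟩
  obtain ⟨i₀, hi₀⟩ := U.exists_eventually_of_eventually_exists (hgood.mono hidx)
  refine ⟨fun i => s(C i, D i), ⟨i₀, ?_⟩, fun i => ?_, fun i j hij => ?_,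
    fun i j hij => Set.disjoint_iff_inter_eq_empty.mp (hdisjLim i j hij), fun i => ?_⟩
  · show s(C i₀, D i₀) = s(A, B)
    rw [tendsto_nhds_unique_of_eventuallyEq (hC i₀) hα (hi₀.mono fun n h => h.1),
      tendsto_nhds_unique_of_eventuallyEq (hD i₀) hβ (hi₀.mono fun n h => h.2)]
  · exact mem_ulimSet_of_tendsto (hgood.mono fun n hn => hmem n hn i) (tendsto_mk (hC i) (hD i))
  · by_contra hne
    have h := hdisjLim i j hne
    rw [show s(C i, D i) = s(C j, D j) from hij, disjoint_self, bot_eq_empty] at h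
    exact (chordSet_nonempty _).ne_empty h
  · rw [chordMap_mk, chordMap_mk, hσC, hσD]

lemma invariant_limLam (hU : (U : Filter ℕ) ≤ atTop) (hN : ∀ n, (N n).Invariant 3) :
    (limLam U N).Invariant 3 :=
  ⟨fun _ hc => chordMap_mem_limLam (fun n => (hN n).1) hc,
    fun _ hc => exists_preimage_limLam hU (fun n => (hN n).2.1) hc,
    fun _ hc hnd => exists_siblings_limLam hU hN hc hnd⟩

lemma isLimitLam_limLam (hU : (U : Filter ℕ) ≤ atTop) (hN : ∀ n, IsLimitLam (N n)) :
    IsLimitLam (limLam U N) := by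
  have hpos : ∀ j : ℕ, (0 : ℝ) < 1 / (j + 1) := fun j => Nat.one_div_pos_of_nat
  choose n hn using fun j => (eventually_leavesClose_limLam (U := U) (N := N) (hpos j)).exists
  have approx : ∀ j : ℕ, ∃ M : Lamination, (M.Invariant 3 ∧ M.Clean) ∧
      LeavesClose (1 / (j + 1)) M (N (n j)) := fun j => by
    obtain ⟨Λi, hΛi, hconv⟩ := (hN (n j)).2
    obtain ⟨m, hm⟩ := (hconv _ (hpos j)).exists
    exact ⟨Λi m, hΛi m, hm⟩
  choose M hM hMn using approx
  refine ⟨invariant_limLam hU fun n => (hN n).1, M, hM, lamTendsto_iff.mpr fun ε hε => ?_⟩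
  filter_upwards [tendsto_one_div_add_atTop_nhds_zero_nat.eventually (gt_mem_nhds (half_pos hε))]
    with j hj
  exact ((hMn j).trans (hn j)).mono (by linarith)

end NonprincipalLimit

section Portraits

variable {ι : Type*}

lemma portraitDist_mk (p q k l : Chord) : portraitDist s(p, q) s(k, l) =
    min (max (dist p k) (dist q l)) (max (dist p l) (dist q k)) :=
  rfl

lemma exists_eq_mk_max_dist_le (P : Portrait) (k l : Chord) :
    ∃ p q, P = s(p, q) ∧ max (dist p k) (dist q l) ≤ portraitDist P s(k, l) := by
  induction P using Sym2.ind with | _ p q =>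
  rcases le_total (max (dist p k) (dist q l)) (max (dist p l) (dist q k)) with h | h
  · exact ⟨p, q, rfl, by rw [portraitDist_mk, min_eq_left h]⟩
  · exact ⟨q, p, Sym2.eq_swap, by rw [portraitDist_mk, min_eq_right h, max_comm]⟩

lemma exists_tendsto_of_tendsto_portraitDist {l : Filter ι} {P : ι → Portrait} {k k' : Chord}
    (h : Tendsto (fun i => portraitDist (P i) s(k, k')) l (𝓝 0)) :
    ∃ p q : ι → Chord, (∀ i, P i = s(p i, q i)) ∧ Tendsto p l (𝓝 k) ∧ Tendsto q l (𝓝 k') := by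
  choose p q hPpq hle using fun i => exists_eq_mk_max_dist_le (P i) k k'
  refine ⟨p, q, hPpq, tendsto_iff_dist_tendsto_zero.mpr ?_, tendsto_iff_dist_tendsto_zero.mpr ?_⟩
  · exact squeeze_zero (fun _ => dist_nonneg) (fun i => (le_max_left _ _).trans (hle i)) h
  · exact squeeze_zero (fun _ => dist_nonneg) (fun i => (le_max_right _ _).trans (hle i)) h

lemma tendsto_portraitDist_mk {l : Filter ι} {p q : ι → Chord} {k k' : Chord}
    (hp : Tendsto p l (𝓝 k)) (hq : Tendsto q l (𝓝 k')) :
    Tendsto (fun i => portraitDist s(p i, q i) s(k, k')) l (𝓝 0) := by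
  refine squeeze_zero (fun i => ?_) (fun i => ?_) <| by
    simpa using (tendsto_iff_dist_tendsto_zero.mp hp).max (tendsto_iff_dist_tendsto_zero.mp hq)
  · rw [portraitDist_mk]
    exact le_min (le_max_of_le_left dist_nonneg) (le_max_of_le_left dist_nonneg)
  · rw [portraitDist_mk]
    exact min_le_left _ _

lemma exists_tendsto_portraitDist (U : Ultrafilter ι) {Q : ι → Portrait} (hQ : ∀ i, Q i ∈ CrP) :
    ∃ K ∈ CrP, Tendsto (fun i => portraitDist (Q i) K) U (𝓝 0) := by
  choose c y hcy hc hy hcross using hQ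
  obtain ⟨k, hk⟩ := U.exists_tendsto c
  obtain ⟨k', hk'⟩ := U.exists_tendsto y
  refine ⟨s(k, k'), ⟨k, k', rfl,
    isClosed_setOf_isCritChord.mem_of_tendsto hk (Eventually.of_forall hc),
    isClosed_setOf_isCritChord.mem_of_tendsto hk' (Eventually.of_forall hy),
    not_cross_of_tendsto hk hk' (Eventually.of_forall hcross)⟩, ?_⟩
  simpa only [hcy] using tendsto_portraitDist_mk hk hk'

lemma mem_CC_limLam {U : Ultrafilter ι} {N : ι → Lamination} {P : ι → Portrait} {K : Portrait}
    (hK : K ∈ CrP) (hP : ∀ i, P i ∈ CC (N i))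
    (hPK : Tendsto (fun i => portraitDist (P i) K) U (𝓝 0)) : K ∈ CC (limLam U N) := by
  obtain ⟨k, k', rfl, -⟩ := id hK
  obtain ⟨p, q, hPpq, hp, hq⟩ := exists_tendsto_of_tendsto_portraitDist hPK
  refine ⟨hK, fun c hc => ?_⟩
  rcases Sym2.mem_iff.mp hc with rfl | rfl
  · exact not_cross_limLam hp fun i => (hP i).2 _ (by rw [hPpq i]; exact Sym2.mem_mk_left _ _)
  · exact not_cross_limLam hq fun i => (hP i).2 _ (by rw [hPpq i]; exact Sym2.mem_mk_right _ _)

lemma exists_friend_of_tendsto {U : Ultrafilter ℕ} (hU : (U : Filter ℕ) ≤ atTop)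
    {N : ℕ → Lamination} (hN : ∀ n, IsLimitLam (N n) ∧ (N n).NonemptyLam)
    {P Q : ℕ → Portrait} (hP : ∀ n, P n ∈ CC (N n)) (hQ : ∀ n, Q n ∈ CC (N n))
    {K : Portrait} (hK : K ∈ CrP) (hPK : Tendsto (fun n => portraitDist (P n) K) U (𝓝 0)) :
    ∃ K' ∈ CrP, Friends K K' ∧ Tendsto (fun n => portraitDist (Q n) K') U (𝓝 0) := by
  obtain ⟨K', hK', hQK'⟩ := exists_tendsto_portraitDist U fun n => (hQ n).1
  refine ⟨K', hK', ⟨limLam U N, isLimitLam_limLam hU fun n => (hN n).1,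
    limLam_nonemptyLam fun n => ⟨(hN n).1.1, (hN n).2⟩, mem_CC_limLam hK hP hPK,
    mem_CC_limLam hK' hQ hQK'⟩, hQK'⟩

lemma critOrbit_inter_Iarc_eq_empty_of_tendsto {U : Ultrafilter ι} {c y : ι → Chord}
    {k k' : Chord} (hc : Tendsto c U (𝓝 k)) (hy : Tendsto y U (𝓝 k')) (hk' : IsCritChord k')
    (h : ∀ᶠ i in U, critOrbit (c i) ∩ Iarc (y i) = ∅) : critOrbit k ∩ Iarc k' = ∅ := by
  refine eq_empty_iff_forall_notMem.mpr fun z ⟨⟨m, hm, a, ha, hz⟩, hzI⟩ => ?_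
  obtain ⟨α, β, A, B, hαβ, hα, hβ, rfl⟩ := exists_endpoints_tendsto hc
  obtain ⟨w, hw, hwa⟩ : ∃ w : ι → SPt, (∀ i, w i ∈ c i) ∧ Tendsto w U (𝓝 a) := by
    rcases Sym2.mem_iff.mp ha with rfl | rfl
    · exact ⟨α, fun i => by rw [hαβ i]; exact Sym2.mem_mk_left _ _, hα⟩
    · exact ⟨β, fun i => by rw [hαβ i]; exact Sym2.mem_mk_right _ _, hβ⟩
  have hiter := (((continuous_sigmaS 3).iterate m).tendsto a).comp hwa
  rw [hz] at hiter
  obtain ⟨i, hi, hiI⟩ := (h.and (eventually_mem_Iarc hiter hy hk' hzI)).exists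
  exact (eq_empty_iff_forall_notMem.mp hi) _ ⟨⟨m, hm, w i, hw i, rfl⟩, hiI⟩

lemma IsWeak.eq_empty_or_eq_empty {K : Portrait} (hK : IsWeak K) {p q : Chord}
    (h : K = s(p, q)) : critOrbit p ∩ Iarc q = ∅ ∨ critOrbit q ∩ Iarc p = ∅ := by
  obtain ⟨-, c, y, rfl, hw⟩ := hK
  rcases Sym2.eq_iff.mp h.symm with ⟨rfl, rfl⟩ | ⟨rfl, rfl⟩
  exacts [hw, hw.symm]

lemma isWeak_of_tendsto {U : Ultrafilter ι} {Q : ι → Portrait} {K : Portrait}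
    (hQ : ∀ i, IsWeak (Q i)) (hK : K ∈ CrP)
    (hQK : Tendsto (fun i => portraitDist (Q i) K) U (𝓝 0)) : IsWeak K := by
  obtain ⟨k, k', rfl, hk, hk', -⟩ := id hK
  obtain ⟨p, q, hQpq, hp, hq⟩ := exists_tendsto_of_tendsto_portraitDist hQK
  rcases Ultrafilter.eventually_or.mp (Eventually.of_forall fun i =>
    (hQ i).eq_empty_or_eq_empty (hQpq i)) with h | h
  · exact ⟨hK, k, k', rfl, Or.inl (critOrbit_inter_Iarc_eq_empty_of_tendsto hp hq hk' h)⟩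
  · exact ⟨hK, k, k', rfl, Or.inr (critOrbit_inter_Iarc_eq_empty_of_tendsto hq hp hk h)⟩

end Portraits

/-- a limit in `CrP` of prime critical portraits is prime. -/
theorem stmt18 (Ki : ℕ → Portrait) (K : Portrait) (hK : K ∈ CrP)
    (hprime : ∀ i, IsPrime (Ki i)) (hconv : PortraitTendsto Ki K) :
    IsPrime K := by
  choose K₁ K₂ hfriend₁ hfriend₂ hweak using hprime
  choose N hN hNne hKN hK₁N using hfriend₁
  choose M hM hMne hK₁M hK₂M using hfriend₂
  let U := Ultrafilter.of (atTop : Filter ℕ)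
  have hU : (U : Filter ℕ) ≤ atTop := Ultrafilter.of_le _
  obtain ⟨K', hK', hKK', hK₁K'⟩ :=
    exists_friend_of_tendsto hU (fun n => ⟨hN n, hNne n⟩) hKN hK₁N hK (hconv.mono_left hU)
  obtain ⟨K'', hK'', hK'K'', hK₂K''⟩ :=
    exists_friend_of_tendsto hU (fun n => ⟨hM n, hMne n⟩) hK₁M hK₂M hK' hK₁K'
  exact ⟨K', K'', hKK', hK'K'', isWeak_of_tendsto hweak hK'' hK₂K''⟩
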